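/- arXiv:1209.3157 — 12 statements merged into one kernel-verified Lean document; each statement's English description precedes it below -/
import Mathlib

section
/- Let f be a soft int-group on a group G over a universe U. Then f is a normal soft int-group if and only if f(x) ⊆ f([x,y]) for all x, y ∈ G, where [x,y] = x⁻¹*y⁻¹*x*y is the commutator of x and y. -/
/-- A soft int-group on a group `G` over universe `U`: a soft set `f : G → Set U`
such that `f x ∩ f y ⊆ f (x * y)` and `f x⁻¹ = f x` for all `x y : G`. -/
def IsSoftIntGroup {U G : Type*} [Group G] (f : G → Set U) : Prop :=
  (∀ x y : G, f x ∩ f y ⊆ f (x * y)) ∧ (∀ x : G, f x⁻¹ = f x)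

/-- A normal soft int-group: a soft int-group with `f (x * y) = f (y * x)`. -/
def IsNormalSoftIntGroup {U G : Type*} [Group G] (f : G → Set U) : Prop :=
  IsSoftIntGroup f ∧ ∀ x y : G, f (x * y) = f (y * x)

/-- Soft product of soft sets: `(f * g)(x) = ⋃ {f u ∩ g v : u * v = x}`. -/
def softProd {U G : Type*} [Group G] (f g : G → Set U) : G → Set U :=
  fun x => ⋃ (u : G) (v : G) (_ : u * v = x), f u ∩ g v

/-- A soft int-group is normal iff `f x ⊆ f [x,y]` for all `x y`. -/
theorem stmt_4 {U G : Type*} [Group G] (f : G → Set U) (hf : IsSoftIntGroup f) :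
    IsNormalSoftIntGroup f ↔ (∀ x y : G, f x ⊆ f (x⁻¹ * y⁻¹ * x * y)) := by
  obtain ⟨hmul, hinv⟩ := hf
  constructor
  · rintro ⟨-, hn⟩ x y
    have hconj : f (y⁻¹ * x * y) = f x := by
      rw [show y⁻¹ * x * y = y⁻¹ * (x * y) by group, hn,
        show x * y * y⁻¹ = x by group]
    intro a ha
    have : a ∈ f x⁻¹ ∩ f (y⁻¹ * x * y) := ⟨by rw [hinv]; exact ha, by rw [hconj]; exact ha⟩
    have := hmul _ _ this
    convert this using 2
    group
  · intro h
    have hconj : ∀ x y : G, f x ⊆ f (y⁻¹ * x * y) := by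
      intro x y a ha
      have h1 : a ∈ f x ∩ f (x⁻¹ * y⁻¹ * x * y) := ⟨ha, h x y ha⟩
      have := hmul _ _ h1
      convert this using 2
      group
    have hconj' : ∀ x y : G, f (y⁻¹ * x * y) = f x := by
      intro x y
      apply Set.Subset.antisymm
      · intro a ha
        have := hconj (y⁻¹ * x * y) y⁻¹ ha
        convert this using 2
        group
      · exact hconj x y
    refine ⟨⟨hmul, hinv⟩, fun x y => ?_⟩
    have := hconj' (x * y) x
    rw [← this]
    congr 1
    group
end

section
/- Let f : G → Set U be a soft set on a group G over a universe U. Then f is a normal soft int-group if and only if for every α ∈ Set U, the α-inclusion f^α = {x ∈ G : α ⊆ f(x)} is a normal subgroup of G whenever f^α is nonempty. -/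
/-- A soft set is a normal soft int-group iff every nonempty α-inclusion is a
normal subgroup of `G`. -/
theorem stmt_5 {U G : Type*} [Group G] (f : G → Set U) :
    IsNormalSoftIntGroup f ↔
      ∀ α : Set U, {x : G | α ⊆ f x}.Nonempty →
        ∃ N : Subgroup G, (N : Set G) = {x : G | α ⊆ f x} ∧ N.Normal := by
  constructor
  · rintro ⟨⟨hmul, hinv⟩, hnorm⟩ α ⟨x0, hx0⟩
    have hone : ∀ x : G, f x ⊆ f 1 := by
      intro x
      have : f x ∩ f x⁻¹ ⊆ f (x * x⁻¹) := hmul x x⁻¹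
      simpa [hinv x] using this
    refine ⟨{ carrier := {x : G | α ⊆ f x}
              one_mem' := hx0.trans (hone x0)
              mul_mem' := fun {a b} ha hb =>
                (Set.subset_inter ha hb).trans (hmul a b)
              inv_mem' := fun {a} ha => by
                simpa [Set.mem_setOf_eq, hinv a] using ha }, rfl, ?_⟩
    constructor
    intro n hn g
    have hn' : α ⊆ f n := hn
    show α ⊆ f (g * n * g⁻¹)
    rw [show g * n * g⁻¹ = g * (n * g⁻¹) by group]
    rw [hnorm g (n * g⁻¹)]
    simpa using hn'
  · intro h
    have key : ∀ x y : G, x ∈ {z : G | f x ⊆ f z} → False ∨ True := fun _ _ _ => Or.inr trivial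
    have hinv : ∀ x : G, f x⁻¹ = f x := by
      have step : ∀ x : G, f x ⊆ f x⁻¹ := by
        intro x
        obtain ⟨N, hN, _⟩ := h (f x) ⟨x, show f x ⊆ f x from subset_rfl⟩
        have hxN : x ∈ N := by rw [← SetLike.mem_coe, hN]; exact fun a ha => ha
        have := N.inv_mem hxN
        rw [← SetLike.mem_coe, hN] at this
        exact this
      intro x
      refine Set.Subset.antisymm ?_ (step x)
      have := step x⁻¹
      simpa using this
    have hmul : ∀ x y : G, f x ∩ f y ⊆ f (x * y) := by
      intro x y
      obtain ⟨N, hN, _⟩ := h (f x ∩ f y) ⟨x, Set.inter_subset_left⟩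
      have hx : x ∈ N := by rw [← SetLike.mem_coe, hN]; exact Set.inter_subset_left
      have hy : y ∈ N := by rw [← SetLike.mem_coe, hN]; exact Set.inter_subset_right
      have := N.mul_mem hx hy
      rw [← SetLike.mem_coe, hN] at this
      exact this
    refine ⟨⟨hmul, hinv⟩, ?_⟩
    have step : ∀ x y : G, f (x * y) ⊆ f (y * x) := by
      intro x y
      obtain ⟨N, hN, hNn⟩ := h (f (x * y)) ⟨x * y, show f (x*y) ⊆ f (x*y) from subset_rfl⟩
      have hxy : x * y ∈ N := by rw [← SetLike.mem_coe, hN]; exact fun a ha => ha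
      have : y * (x * y) * y⁻¹ ∈ N := hNn.conj_mem _ hxy y
      rw [show y * (x * y) * y⁻¹ = y * x by group] at this
      rw [← SetLike.mem_coe, hN] at this
      exact this
    exact fun x y => Set.Subset.antisymm (step x y) (step y x)
end

section
/- Let U be a nonempty type and G a group. Then every subgroup of G is normal (i.e., G is a Dedekind group) if and only if every soft int-group on G over U is a normal soft int-group. -/
/-!
A soft int-group `f` is the same thing as a family of subgroups `{x | t ∈ f x}` indexed by
`t : U` (each one possibly empty), and `f` is normal exactly when these level sets are closed
under `x * y ↦ y * x`, i.e. are normal subgroups. So in a Dedekind group every soft int-group is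
normal; conversely a subgroup `H` is recovered as the level set of the soft int-group that is `U`
on `H` and `∅` off it, which is normal as soon as `U` has a point.
-/

theorem Subgroup.normal_of_mem_comm {G : Type*} [Group G] {H : Subgroup G}
    (h : ∀ a b : G, a * b ∈ H → b * a ∈ H) : H.Normal where
  conj_mem n hn g := by
    have : g * (n * g⁻¹) ∈ H := h _ _ (by simpa using hn)
    simpa [mul_assoc] using this

namespace IsSoftIntGroup

variable {U G : Type*} [Group G] {f : G → Set U}

theorem mem_one_of_mem (hf : IsSoftIntGroup f) {t : U} {a : G} (ha : t ∈ f a) : t ∈ f 1 := by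
  simpa using hf.1 a a⁻¹ ⟨ha, (hf.2 a).symm ▸ ha⟩

def levelSubgroup (hf : IsSoftIntGroup f) (t : U) (ht : t ∈ f 1) : Subgroup G where
  carrier := {x | t ∈ f x}
  mul_mem' hx hy := hf.1 _ _ ⟨hx, hy⟩
  one_mem' := ht
  inv_mem' {x} hx := show t ∈ f x⁻¹ from (hf.2 x).symm ▸ hx

theorem isNormalSoftIntGroup_of_levelSubgroup_normal (hf : IsSoftIntGroup f)
    (hnormal : ∀ t ht, (hf.levelSubgroup t ht).Normal) : IsNormalSoftIntGroup f :=
  have hsub (x y : G) : f (x * y) ⊆ f (y * x) :=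
    fun t ht => (hnormal t (hf.mem_one_of_mem ht)).mem_comm ht
  ⟨hf, fun x y => (hsub x y).antisymm (hsub y x)⟩

end IsSoftIntGroup

namespace Subgroup

variable {G : Type*} [Group G]

def softIndicator (U : Type*) (H : Subgroup G) : G → Set U := fun x => {_t | x ∈ H}

theorem isSoftIntGroup_softIndicator {U : Type*} (H : Subgroup G) :
    IsSoftIntGroup (H.softIndicator U) :=
  ⟨fun _ _ _ ⟨hx, hy⟩ => H.mul_mem hx hy, fun x => by simp [softIndicator]⟩

theorem normal_of_isNormalSoftIntGroup_softIndicator {U : Type*} [Nonempty U] {H : Subgroup G}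
    (hH : IsNormalSoftIntGroup (H.softIndicator U)) : H.Normal :=
  let t : U := Classical.arbitrary U
  normal_of_mem_comm fun a b hab => show t ∈ H.softIndicator U (b * a) from hH.2 a b ▸ hab

end Subgroup

/-- `G` is a Dedekind group iff every soft int-group on `G` over a nonempty
universe `U` is a normal soft int-group. -/
theorem stmt_7 {U G : Type*} [Nonempty U] [Group G] :
    (∀ H : Subgroup G, H.Normal) ↔
      (∀ f : G → Set U, IsSoftIntGroup f → IsNormalSoftIntGroup f) :=
  ⟨fun hded _ hf => hf.isNormalSoftIntGroup_of_levelSubgroup_normal fun _ _ => hded _,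
    fun hall H =>
      H.normal_of_isNormalSoftIntGroup_softIndicator (hall _ H.isSoftIntGroup_softIndicator)⟩
end

section
/- Let f be a normal soft int-group on a group G over a universe U. Then for every soft set g : G → Set U, the soft products satisfy f * g = g * f, where (f * g)(x) = ⋃ {f(u) ∩ g(v) : u, v ∈ G, u*v = x}. -/
/-- A normal soft int-group commutes with every soft set under soft product. -/
theorem stmt_8 {U G : Type*} [Group G] (f : G → Set U)
    (hf : IsNormalSoftIntGroup f) (g : G → Set U) :
    softProd f g = softProd g f := by
  obtain ⟨-, hn⟩ := hf
  funext x
  ext a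
  simp only [softProd, Set.mem_iUnion, Set.mem_inter_iff]
  constructor
  · rintro ⟨u, v, rfl, hfu, hgv⟩
    refine ⟨v, v⁻¹ * u * v, by group, hgv, ?_⟩
    have : f (v⁻¹ * u * v) = f u := by
      rw [hn (v⁻¹ * u) v]; group
    rw [this]; exact hfu
  · rintro ⟨u, v, rfl, hgu, hfv⟩
    refine ⟨u * v * u⁻¹, u, by group, ?_, hgu⟩
    have : f (u * v * u⁻¹) = f v := by
      rw [hn (u * v) u⁻¹]; group
    rw [this]; exact hfv
end

section
/- Let f be a normal soft int-group and g a soft int-group on a group G over a universe U. Then the soft product f * g, defined by (f * g)(x) = ⋃ {f(u) ∩ g(v) : u, v ∈ G, u*v = x}, is a soft int-group on G. -/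
lemma softProd_mem {U G : Type*} [Group G] {f g : G → Set U} {x : G} {a : U} :
    a ∈ softProd f g x ↔ ∃ u v : G, u * v = x ∧ a ∈ f u ∩ g v := by
  simp only [softProd, Set.mem_iUnion, Set.mem_inter_iff]
  tauto

/-- The soft product of a normal soft int-group with a soft int-group is a
soft int-group. -/
theorem stmt_9 {U G : Type*} [Group G] (f g : G → Set U)
    (hf : IsNormalSoftIntGroup f) (hg : IsSoftIntGroup g) :
    IsSoftIntGroup (softProd f g) := by
  obtain ⟨⟨hfm, hfi⟩, hfn⟩ := hf
  obtain ⟨hgm, hgi⟩ := hg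
  have hinv : ∀ x : G, softProd f g x⁻¹ ⊆ softProd f g x := by
    intro x a ha
    rw [softProd_mem] at ha ⊢
    obtain ⟨u, v, huv, hau, hav⟩ := ha
    refine ⟨v⁻¹ * u⁻¹ * v, v⁻¹, by rw [show v⁻¹*u⁻¹*v*v⁻¹ = (u*v)⁻¹ by group, huv, inv_inv], ?_, ?_⟩
    · have : f (v⁻¹ * u⁻¹ * v) = f u := by
        rw [hfn, show v * (v⁻¹ * u⁻¹) = u⁻¹ by group, hfi]
      rw [this]; exact hau
    · rw [hgi]; exact hav
  constructor
  · intro x y a ha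
    obtain ⟨hax, hay⟩ := ha
    rw [softProd_mem] at hax hay ⊢
    obtain ⟨u, v, huv, hau, hav⟩ := hax
    obtain ⟨s, t, hst, has, hat⟩ := hay
    refine ⟨u * (v * s * v⁻¹), v * t, by rw [← huv, ← hst]; group, ?_, ?_⟩
    · apply hfm
      refine ⟨hau, ?_⟩
      have : f (v * s * v⁻¹) = f s := by
        rw [hfn, show v⁻¹ * (v * s) = s by group]
      rw [this]; exact has
    · exact hgm v t ⟨hav, hat⟩
  · intro x
    apply Set.Subset.antisymm (hinv x)
    have := hinv x⁻¹
    rwa [inv_inv] at this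
end

section
/- Let f be a soft int-group on a group G over a universe U. Then the normalizer N(f) = {x ∈ G : f(x*y) = f(y*x) for all y ∈ G} is a subgroup of G, and the restriction of f to N(f) is a normal soft int-group on N(f) (i.e., f satisfies the soft int-group conditions on N(f) together with f(x*y) = f(y*x) for all x, y ∈ N(f)). -/
/-- The normalizer of a soft int-group is a subgroup of `G`, and the
restriction of `f` to it is a normal soft int-group. -/
theorem stmt_12 {U G : Type*} [Group G] (f : G → Set U)
    (hf : IsSoftIntGroup f) :
    ∃ N : Subgroup G, (N : Set G) = {x : G | ∀ y : G, f (x * y) = f (y * x)} ∧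
      IsNormalSoftIntGroup (fun x : N => f (x : G)) := by
  refine ⟨{ carrier := {x : G | ∀ y : G, f (x * y) = f (y * x)}
            one_mem' := by intro y; simp
            mul_mem' := by
              intro x z hx hz y
              calc f (x * z * y) = f (x * (z * y)) := by rw [mul_assoc]
                _ = f (z * y * x) := hx _
                _ = f (z * (y * x)) := by rw [mul_assoc]
                _ = f (y * x * z) := hz _
                _ = f (y * (x * z)) := by rw [mul_assoc]
            inv_mem' := by
              intro x hx y
              calc f (x⁻¹ * y) = f ((x⁻¹ * y)⁻¹) := (hf.2 _).symm
                _ = f (y⁻¹ * x) := by rw [mul_inv_rev, inv_inv]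
                _ = f (x * y⁻¹) := (hx y⁻¹).symm
                _ = f ((x * y⁻¹)⁻¹) := (hf.2 _).symm
                _ = f (y * x⁻¹) := by rw [mul_inv_rev, inv_inv] }, rfl, ?_⟩
  refine ⟨⟨fun x y => hf.1 x y, fun x => by simpa using hf.2 (x : G)⟩, ?_⟩
  intro x y
  exact x.2 y
end

section
/- Let G be a finite group and f a soft int-group on G over a universe U whose support {x ∈ G : f(x) ≠ ∅} is nonempty. Then the number of distinct conjugates of f, i.e., the cardinality of the set {f^u : u ∈ G} of functions G → Set U where f^u(x) = f(u*x*u⁻¹), equals the index of the normalizer N(f) = {x ∈ G : f(x*y) = f(y*x) for all y ∈ G} in G. -/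
/-- For a finite group, the number of distinct conjugates of a soft int-group
with nonempty support equals the index of its normalizer. -/
theorem stmt_13 {U G : Type*} [Group G] [Fintype G] (f : G → Set U)
    (hf : IsSoftIntGroup f) (hsupp : {x : G | f x ≠ ∅}.Nonempty)
    (N : Subgroup G)
    (hN : (N : Set G) = {x : G | ∀ y : G, f (x * y) = f (y * x)}) :
    Nat.card {g : G → Set U | ∃ u : G, g = fun x => f (u * x * u⁻¹)} =
      N.index := by
  classical
  have hmem : ∀ n : G, n ∈ N ↔ ∀ y : G, f (n * y) = f (y * n) := by
    intro n
    rw [← SetLike.mem_coe, hN]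
    exact Iff.rfl
  have hconj : ∀ n : G, n ∈ N → ∀ x : G, f (n * x * n⁻¹) = f x := by
    intro n hn x
    have h1 : n * x * n⁻¹ = n * (x * n⁻¹) := by group
    rw [h1, (hmem n).1 hn (x * n⁻¹)]
    congr 1
    group
  have key : ∀ u v : G,
      ((fun x => f (u⁻¹ * x * u)) = (fun x => f (v⁻¹ * x * v))) ↔ u⁻¹ * v ∈ N := by
    intro u v
    constructor
    · intro h
      have h' : ∀ x : G, f (u⁻¹ * x * u) = f (v⁻¹ * x * v) := fun x => congrFun h x
      have g : ∀ z : G, f z = f ((u⁻¹ * v)⁻¹ * z * (u⁻¹ * v)) := by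
        intro z
        have := h' (u * z * u⁻¹)
        have e1 : u⁻¹ * (u * z * u⁻¹) * u = z := by group
        have e2 : v⁻¹ * (u * z * u⁻¹) * v = (u⁻¹ * v)⁻¹ * z * (u⁻¹ * v) := by group
        rw [e1, e2] at this
        exact this
      rw [hmem]
      intro y
      have := g ((u⁻¹ * v) * y)
      have e3 : (u⁻¹ * v)⁻¹ * ((u⁻¹ * v) * y) * (u⁻¹ * v) = y * (u⁻¹ * v) := by group
      rw [e3] at this
      exact this
    · intro hn
      funext x
      have e : v⁻¹ * x * v = (u⁻¹ * v)⁻¹ * (u⁻¹ * x * u) * ((u⁻¹ * v)⁻¹)⁻¹ := by group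
      rw [e, hconj (u⁻¹ * v)⁻¹ (inv_mem hn)]
  let S : Set (G → Set U) := {g : G → Set U | ∃ u : G, g = fun x => f (u * x * u⁻¹)}
  let s : G → S := fun u =>
    ⟨fun x => f (u⁻¹ * x * u), u⁻¹, by funext x; rw [inv_inv]⟩
  let F : G ⧸ N → S := Quotient.lift s (by
    intro a b hab
    have : a⁻¹ * b ∈ N := (QuotientGroup.leftRel_apply).1 hab
    exact Subtype.ext ((key a b).2 this))
  have hFbij : Function.Bijective F := by
    constructor
    · intro q1 q2
      induction q1 using Quotient.ind with
      | _ a =>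
      induction q2 using Quotient.ind with
      | _ b =>
      intro h
      have : s a = s b := h
      have h2 : a⁻¹ * b ∈ N := (key a b).1 (congrArg Subtype.val this)
      exact Quotient.sound ((QuotientGroup.leftRel_apply).2 h2)
    · rintro ⟨g, u, rfl⟩
      refine ⟨Quotient.mk _ u⁻¹, ?_⟩
      apply Subtype.ext
      show (fun x => f (u⁻¹⁻¹ * x * u⁻¹)) = _
      funext x
      rw [inv_inv]
  have : Nat.card S = Nat.card (G ⧸ N) :=
    (Nat.card_congr (Equiv.ofBijective F hFbij)).symm
  rw [this]
  rfl
end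

section
/- Let f be a soft int-group on a group G over a universe U. Then the soft set x ↦ ⋂_{u ∈ G} f(u*x*u⁻¹) (the pointwise intersection of all conjugates f^u of f) is a normal soft int-group on G. -/
/-- The pointwise intersection of all conjugates of a soft int-group is a
normal soft int-group. -/
theorem stmt_14 {U G : Type*} [Group G] (f : G → Set U)
    (hf : IsSoftIntGroup f) :
    IsNormalSoftIntGroup (fun x => ⋂ u : G, f (u * x * u⁻¹)) := by
  obtain ⟨hmul, hinv⟩ := hf
  refine ⟨⟨fun x y a ha => ?_, fun x => ?_⟩, fun x y => ?_⟩
  · obtain ⟨ha1, ha2⟩ := ha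
    simp only [Set.mem_iInter] at ha1 ha2 ⊢
    intro u
    have := hmul (u * x * u⁻¹) (u * y * u⁻¹) ⟨ha1 u, ha2 u⟩
    have h2 : u * x * u⁻¹ * (u * y * u⁻¹) = u * (x * y) * u⁻¹ := by group
    rwa [h2] at this
  · ext a
    simp only [Set.mem_iInter]
    constructor <;> intro h u
    · have := h u
      have h2 : u * x⁻¹ * u⁻¹ = (u * x * u⁻¹)⁻¹ := by group
      rw [h2, hinv] at this; exact this
    · have := h u
      have h2 : u * x⁻¹ * u⁻¹ = (u * x * u⁻¹)⁻¹ := by group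
      rw [h2, hinv]; exact this
  · ext a
    simp only [Set.mem_iInter]
    constructor <;> intro h u
    · have := h (u * y)
      have h2 : u * y * (x * y) * (u * y)⁻¹ = u * (y * x) * u⁻¹ := by group
      rwa [h2] at this
    · have := h (u * x)
      have h2 : u * x * (y * x) * (u * x)⁻¹ = u * (x * y) * u⁻¹ := by group
      rwa [h2] at this
end

section
/- Let f be a soft int-group on a group G over a universe U. Then the soft set h defined by h(x) = ⋂_{u ∈ G} f(u*x*u⁻¹) is the largest normal soft int-group contained in f: h(x) ⊆ f(x) for all x ∈ G, and for every normal soft int-group g on G with g(x) ⊆ f(x) for all x ∈ G, one has g(x) ⊆ h(x) for all x ∈ G. -/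
/-- The pointwise intersection of all conjugates of a soft int-group `f` is
the largest normal soft int-group contained in `f`. -/
theorem stmt_15 {U G : Type*} [Group G] (f : G → Set U)
    (hf : IsSoftIntGroup f) :
    (∀ x : G, (⋂ u : G, f (u * x * u⁻¹)) ⊆ f x) ∧
    (∀ g : G → Set U, IsNormalSoftIntGroup g → (∀ x : G, g x ⊆ f x) →
      ∀ x : G, g x ⊆ ⋂ u : G, f (u * x * u⁻¹)) := by
  constructor
  · intro x a ha
    have := Set.mem_iInter.mp ha 1
    simpa using this
  · intro g hg hsub x a ha
    refine Set.mem_iInter.mpr fun u => ?_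
    have h1 : g (u * x * u⁻¹) = g x := by
      have := hg.2 u (x * u⁻¹)
      simpa [mul_assoc] using this
    exact hsub _ (h1 ▸ ha)
end

section
/- Let f be a normal soft int-group on a group G over a universe U, and for a ∈ G let the coset a·f be the soft set defined by (a·f)(z) = f(a⁻¹*z) for all z ∈ G. Then for all x, y ∈ G, the soft product of cosets satisfies (x·f) * (y·f) = (x*y)·f, where (g * h)(z) = ⋃ {g(u) ∩ h(v) : u, v ∈ G, u*v = z}. -/
/-- For a normal soft int-group, the soft product of cosets satisfies
`(x·f) * (y·f) = (x*y)·f`. -/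
theorem stmt_16 {U G : Type*} [Group G] (f : G → Set U)
    (hf : IsNormalSoftIntGroup f) (x y : G) :
    softProd (fun z => f (x⁻¹ * z)) (fun z => f (y⁻¹ * z)) =
      fun z => f ((x * y)⁻¹ * z) := by
  obtain ⟨⟨hmul, hinv⟩, hnorm⟩ := hf
  funext z
  apply Set.Subset.antisymm
  · intro w hw
    simp only [softProd, Set.mem_iUnion] at hw
    obtain ⟨u, v, huv, hw1, hw2⟩ := hw
    -- w ∈ f (x⁻¹u) ∩ f (y⁻¹v); f(y⁻¹v) = f(v y⁻¹)
    have h2 : w ∈ f (v * y⁻¹) := by rw [hnorm]; exact hw2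
    have h3 : w ∈ f (x⁻¹ * u * (v * y⁻¹)) := hmul _ _ ⟨hw1, h2⟩
    have key : f (x⁻¹ * u * (v * y⁻¹)) = f ((x * y)⁻¹ * z) := by
      rw [hnorm (x⁻¹ * u) (v * y⁻¹),
        show v * y⁻¹ * (x⁻¹ * u) = v * (y⁻¹ * (x⁻¹ * u)) by group,
        hnorm v, ← huv]
      group
    rwa [key] at h3
  · intro w hw
    simp only [softProd, Set.mem_iUnion]
    refine ⟨x, x⁻¹ * z, by group, ?_, ?_⟩
    · -- w ∈ f (x⁻¹ * x) = f 1
      have h1 : w ∈ f ((x*y)⁻¹ * z) := hw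
      have : w ∈ f (((x*y)⁻¹*z) * ((x*y)⁻¹*z)⁻¹) := by
        apply hmul
        exact ⟨h1, by rw [hinv]; exact h1⟩
      rwa [show ((x*y)⁻¹*z) * ((x*y)⁻¹*z)⁻¹ = x⁻¹ * x by group] at this
    · have : f (y⁻¹ * (x⁻¹ * z)) = f ((x*y)⁻¹ * z) := by group
      rwa [this]
end

section
/- Let f be a normal soft int-group on a group G over a universe U, so that the e-set e_f = {x ∈ G : f(x) = f(e)} is a normal subgroup of G. Then f descends to a well-defined function F on the quotient group G/e_f with F(x·e_f) = f(x) for all x ∈ G, and F is a normal soft int-group on G/e_f: F(q) ∩ F(r) ⊆ F(q*r), F(q⁻¹) = F(q), and F(q*r) = F(r*q) for all q, r ∈ G/e_f. -/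
lemma le_one_of_sig {U G : Type*} [Group G] (f : G → Set U)
    (hf : IsSoftIntGroup f) (x : G) : f x ⊆ f 1 := by
  have := hf.1 x x⁻¹
  rw [hf.2 x, Set.inter_self, mul_inv_cancel] at this
  exact this

/-- A normal soft int-group descends to a well-defined normal soft int-group
on the quotient by its e-set. -/
theorem stmt_17 {U G : Type*} [Group G] (f : G → Set U)
    (hf : IsNormalSoftIntGroup f) (N : Subgroup G)
    (hN : (N : Set G) = {x : G | f x = f 1}) [N.Normal] :
    ∃ F : G ⧸ N → Set U, (∀ x : G, F (x : G ⧸ N) = f x) ∧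
      IsNormalSoftIntGroup F := by
  obtain ⟨hsig, hnorm⟩ := hf
  have hmem : ∀ x : G, x ∈ N ↔ f x = f 1 := by
    intro x
    constructor
    · intro h; have : x ∈ (N : Set G) := h; rwa [hN] at this
    · intro h; show x ∈ (N : Set G); rw [hN]; exact h
  have hconst : ∀ a b : G, a⁻¹ * b ∈ N → f a = f b := by
    intro a b hab
    have h1 : f (a⁻¹ * b) = f 1 := (hmem _).1 hab
    have key : ∀ u v : G, f (u⁻¹ * v) = f 1 → f u ⊆ f v := by
      intro u v huv
      have : f u ∩ f (u⁻¹ * v) ⊆ f (u * (u⁻¹ * v)) := hsig.1 u (u⁻¹ * v)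
      rw [huv, mul_inv_cancel_left] at this
      intro z hz
      exact this ⟨hz, le_one_of_sig f hsig u hz⟩
    have h2 : f (b⁻¹ * a) = f 1 := by
      have : (a⁻¹ * b)⁻¹ = b⁻¹ * a := by group
      rw [← this, hsig.2, h1]
    exact Set.Subset.antisymm (key a b h1) (key b a h2)
  refine ⟨Quotient.lift f ?_, fun x => rfl, ⟨⟨?_, ?_⟩, ?_⟩⟩
  · intro a b hab
    exact hconst a b ((QuotientGroup.leftRel_apply).1 hab)
  · intro q r
    induction q using Quotient.inductionOn with | h x =>
    induction r using Quotient.inductionOn with | h y =>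
    exact hsig.1 x y
  · intro q
    induction q using Quotient.inductionOn with | h x =>
    exact hsig.2 x
  · intro q r
    induction q using Quotient.inductionOn with | h x =>
    induction r using Quotient.inductionOn with | h y =>
    exact hnorm x y
end

section
/- Let G and H be groups, let f be a normal soft int-group on G over a universe U, and let φ : G → H be a surjective group homomorphism. Then the soft image φ(f), defined by φ(f)(y) = ⋃ {f(x) : x ∈ G, φ(x) = y} for y ∈ H, is a normal soft int-group on H. -/
/-- The soft image of a normal soft int-group under a surjective group
homomorphism is a normal soft int-group. -/
theorem stmt_18 {U G H : Type*} [Group G] [Group H] (f : G → Set U)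
    (hf : IsNormalSoftIntGroup f) (φ : G →* H) (hφ : Function.Surjective φ) :
    IsNormalSoftIntGroup (fun y : H => ⋃ (x : G) (_ : φ x = y), f x) := by
  obtain ⟨⟨hmul, hinv⟩, hnorm⟩ := hf
  refine ⟨⟨?_, ?_⟩, ?_⟩
  · intro a b z hz
    simp only [Set.mem_inter_iff, Set.mem_iUnion] at hz ⊢
    obtain ⟨⟨x, hx, hzx⟩, ⟨y, hy, hzy⟩⟩ := hz
    exact ⟨x * y, by rw [map_mul, hx, hy], hmul x y ⟨hzx, hzy⟩⟩
  · intro a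
    ext z
    simp only [Set.mem_iUnion]
    constructor
    · rintro ⟨x, hx, hzx⟩
      exact ⟨x⁻¹, by rw [map_inv, hx, inv_inv], by rwa [hinv]⟩
    · rintro ⟨x, hx, hzx⟩
      exact ⟨x⁻¹, by rw [map_inv, hx], by rwa [hinv x]⟩
  · intro a b
    have key : ∀ a b : H, (⋃ (x : G) (_ : φ x = a * b), f x) ⊆
        ⋃ (x : G) (_ : φ x = b * a), f x := by
      intro a b z hz
      simp only [Set.mem_iUnion] at hz ⊢
      obtain ⟨w, hw, hzw⟩ := hz
      obtain ⟨c, hc⟩ := hφ a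
      refine ⟨c⁻¹ * w * c, ?_, ?_⟩
      · simp [map_mul, map_inv, hc, hw, mul_assoc]
      · have : f (c⁻¹ * w * c) = f (c * (c⁻¹ * w)) := hnorm _ _
        rw [this]
        simpa using hzw
    exact Set.Subset.antisymm (key a b) (key b a)
end
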